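/- arXiv:2107.14329 — 3 statements merged into one kernel-verified Lean document; each statement's English description precedes it below -/
import Mathlib

section
/- Let A be an abelian group and H, H₁, ..., Hₙ subgroups of A. If a coset X of H is covered by a finite union of cosets X₁, ..., Xₙ of H₁, ..., Hₙ respectively, then X is covered by the union of those Xᵢ for which H ∩ Hᵢ has finite index in H. (B. H. Neumann's lemma, abelian case.) -/
/-!
Translating by `-a`, the group `H` is covered by the sets `{h ∈ H | a + h ∈ Xᵢ}`, and each of
them is either empty or a coset of `Hᵢ ∩ H` in `H`. Neumann's lemma for a group covered by finitely
many cosets (`AddSubgroup.leftCoset_cover_filter_FiniteIndex`) lets us discard the cosets of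
infinite index, and translating back by `a` gives the claim.
-/

open Pointwise

namespace AddSubgroup

variable {G : Type*} [AddGroup G]

theorem preimage_add_vadd_eq_vadd_addSubgroupOf {H K : AddSubgroup G} {a c : G} {h₀ : H}
    (h₀_mem : a + (h₀ : G) ∈ c +ᵥ (K : Set G)) :
    (fun h : H => a + (h : G)) ⁻¹' (c +ᵥ (K : Set G)) = h₀ +ᵥ (K.addSubgroupOf H : Set H) := by
  ext h
  rw [mem_leftAddCoset_iff] at h₀_mem
  simp only [Set.mem_preimage, mem_leftAddCoset_iff, SetLike.mem_coe, mem_addSubgroupOf]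
  rw [← K.add_mem_cancel_left (K.neg_mem h₀_mem)]
  simp [← add_assoc]

theorem iUnion_finiteIndex_eq_univ_of_cover {ι : Type*} [Finite ι] {K : ι → AddSubgroup G}
    {P : ι → Set G} (hP : ∀ i, ∀ g ∈ P i, P i = g +ᵥ (K i : Set G))
    (hcov : ⋃ i, P i = Set.univ) :
    ⋃ i ∈ {i | (K i).FiniteIndex}, P i = Set.univ := by
  classical
  have := Fintype.ofFinite ι
  let s := Finset.univ.filter fun i => (P i).Nonempty
  let g : ι → G := fun i => if h : (P i).Nonempty then h.some else 0
  have hPg : ∀ i ∈ s, P i = g i +ᵥ (K i : Set G) := fun i hi => by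
    have hne := (Finset.mem_filter.mp hi).2
    simpa [g, hne] using hP i _ hne.some_mem
  have hcover : ⋃ i ∈ s, g i +ᵥ (K i : Set G) = Set.univ := by
    rw [← hcov, ← Set.iUnion₂_congr hPg]
    ext x
    simp [s]
  refine Set.eq_univ_of_univ_subset ?_
  rw [← leftCoset_cover_filter_FiniteIndex hcover]
  refine Set.iUnion₂_subset fun i hi => ?_
  obtain ⟨hs, hfin⟩ := Finset.mem_filter.mp hi
  rw [← hPg i hs]
  exact Set.subset_biUnion_of_mem (u := P) hfin

end AddSubgroup

/-- B. H. Neumann's lemma (abelian case): if a coset of `H` is covered by finitely many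
cosets of subgroups `Hᵢ`, then it is covered by those cosets `Xᵢ` for which
`H ∩ Hᵢ` has finite index in `H`. -/
theorem neumann_lemma {A : Type*} [AddCommGroup A] {n : ℕ} (H : AddSubgroup A)
    (Hs : Fin n → AddSubgroup A) (a : A) (c : Fin n → A)
    (hcov : (a +ᵥ (H : Set A)) ⊆ ⋃ i, (c i +ᵥ (Hs i : Set A))) :
    (a +ᵥ (H : Set A)) ⊆
      ⋃ i ∈ {i : Fin n | (Hs i).relIndex H ≠ 0}, (c i +ᵥ (Hs i : Set A)) := by
  let P : Fin n → Set H := fun i => (fun h : H => a + (h : A)) ⁻¹' (c i +ᵥ (Hs i : Set A))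
  have hcovH : ⋃ i, P i = Set.univ := Set.eq_univ_of_forall fun h => by
    obtain ⟨i, hi⟩ := Set.mem_iUnion.mp (hcov ⟨h, h.2, rfl⟩)
    exact Set.mem_iUnion.mpr ⟨i, hi⟩
  have hcovH_finiteIndex := AddSubgroup.iUnion_finiteIndex_eq_univ_of_cover
    (K := fun i => (Hs i).addSubgroupOf H)
    (fun _ _ => AddSubgroup.preimage_add_vadd_eq_vadd_addSubgroupOf) hcovH
  rintro _ ⟨h, hh, rfl⟩
  obtain ⟨i, hi, hmem⟩ :=
    Set.mem_iUnion₂.mp (hcovH_finiteIndex.symm.subset (Set.mem_univ (⟨h, hh⟩ : H)))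
  exact Set.mem_biUnion (AddSubgroup.finiteIndex_iff.mp hi) hmem
end

section
/- Inclusion–exclusion for cosets: X is contained in X₁ ∪ ... ∪ Xₙ if and only if ∑_{Δ ⊆ {1,...,n}} (−1)^{|Δ|} |X ∩ ⋂_{i∈Δ} Xᵢ| = 0, where |·| counts cosets of K₀ = H ∩ H₁ ∩ ... ∩ Hₙ contained in the set. -/
/-!
Because `K₀` lies in `H` and in every `Hᵢ`, the coset `X` and each `Xᵢ` are unions of
`K₀`-cosets, and `X` contains only finitely many of them. So `X ⊆ ⋃ Xᵢ` iff every `K₀`-coset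
`C ⊆ X` lies in some `Xᵢ`. Exchanging the two sums, the alternating sum counts each such `C` with
weight `∑_{Δ ⊆ S} (-1)^{|Δ|}` where `S = {i | C ⊆ Xᵢ}`; this weight is `1` if `S = ∅` and `0`
otherwise, so the sum is the number of cosets in `X` lying in no `Xᵢ`.
-/

open Pointwise Finset

theorem Finset.sum_neg_one_pow_mul_card_filter_forall {α ι : Type*} [Fintype ι] [DecidableEq ι]
    (s : Finset α) (p : α → ι → Prop) [∀ a i, Decidable (p a i)] :
    ∑ t : Finset ι, (-1 : ℤ) ^ #t * #{a ∈ s | ∀ i ∈ t, p a i} = #{a ∈ s | ∀ i, ¬ p a i} := by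
  calc ∑ t : Finset ι, (-1 : ℤ) ^ #t * #{a ∈ s | ∀ i ∈ t, p a i}
      = ∑ a ∈ s, ∑ t ∈ ({i | p a i} : Finset ι).powerset, (-1 : ℤ) ^ #t := by
        simp only [card_filter, Nat.cast_sum, Nat.cast_ite, Nat.cast_one, Nat.cast_zero, mul_sum,
          mul_ite, mul_one, mul_zero]
        rw [sum_comm]
        refine sum_congr rfl fun a _ => ?_
        rw [← sum_filter]
        congr 1
        ext t
        simp [subset_iff]
    _ = ∑ a ∈ s, if ({i | p a i} : Finset ι) = ∅ then 1 else 0 := by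
        simp_rw [sum_powerset_neg_one_pow_card]
    _ = #{a ∈ s | ∀ i, ¬ p a i} := by
        simp

theorem Set.Finite.natCard_sep {α : Type*} {s : Set α} (hs : s.Finite) (p : α → Prop)
    [DecidablePred p] : Nat.card {a ∈ s | p a} = #{a ∈ hs.toFinset | p a} := by
  rw [Nat.card_coe_set_eq, ← Set.ncard_coe_finset]
  congr 1
  ext a
  simp

theorem Set.Finite.sum_neg_one_pow_mul_natCard_sep_eq_zero_iff {α ι : Type*} [Fintype ι]
    {s : Set α} (hs : s.Finite) (p : α → ι → Prop) :
    ∑ t : Finset ι, (-1 : ℤ) ^ #t * Nat.card {a ∈ s | ∀ i ∈ t, p a i} = 0 ↔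
      ∀ a ∈ s, ∃ i, p a i := by
  classical
  simp_rw [hs.natCard_sep, Finset.sum_neg_one_pow_mul_card_filter_forall, Nat.cast_eq_zero,
    Finset.card_eq_zero, Finset.filter_eq_empty_iff, hs.mem_toFinset, not_forall, not_not]

namespace AddSubgroup

variable {A : Type*} [AddCommGroup A]

/-- The paper's `|S|` is `Nat.card (K₀.cosetsIn S)`. -/
def cosetsIn (K : AddSubgroup A) (S : Set A) : Set (Set A) :=
  {C | (∃ t : A, C = t +ᵥ (K : Set A)) ∧ C ⊆ S}

theorem cosetsIn_inter_biInter {ι : Type*} (K : AddSubgroup A) (X : Set A) (Y : ι → Set A)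
    (s : Finset ι) : K.cosetsIn (X ∩ ⋂ i ∈ s, Y i) = {C ∈ K.cosetsIn X | ∀ i ∈ s, C ⊆ Y i} := by
  ext C
  simp only [cosetsIn, Set.subset_inter_iff, Set.subset_iInter_iff, Set.mem_ofPred_eq, and_assoc]

theorem vadd_subset_vadd_of_mem {K G : AddSubgroup A} (hKG : K ≤ G) {x b : A}
    (hx : x ∈ b +ᵥ (G : Set A)) : x +ᵥ (K : Set A) ⊆ b +ᵥ (G : Set A) := by
  obtain ⟨g, hg, rfl⟩ := hx
  calc (b + g) +ᵥ (K : Set A) ⊆ (b + g) +ᵥ (G : Set A) := Set.vadd_set_mono hKG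
    _ = b +ᵥ (G : Set A) := (leftAddCoset_eq_iff G).2 (by simpa using neg_mem hg)

theorem finite_cosetsIn_vadd {K H : AddSubgroup A} (hfin : K.relIndex H ≠ 0) (a : A) :
    (K.cosetsIn (a +ᵥ (H : Set A))).Finite := by
  have : Finite (H ⧸ K.addSubgroupOf H) := Nat.finite_of_card_ne_zero hfin
  let cosetOf : H ⧸ K.addSubgroupOf H → Set A :=
    Quotient.lift (fun h : H => (a + h) +ᵥ (K : Set A)) fun x y hxy => by
      rw [leftAddCoset_eq_iff, show -(a + (x : A)) + (a + y) = -x + y by abel]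
      exact (QuotientAddGroup.leftRel_apply (s := K.addSubgroupOf H)).1 hxy
  refine (Set.finite_range cosetOf).subset ?_
  rintro C ⟨⟨t, rfl⟩, hC⟩
  obtain ⟨h, hh, rfl⟩ := hC (mem_own_leftAddCoset K.toAddSubmonoid t)
  exact ⟨QuotientAddGroup.mk ⟨h, hh⟩, rfl⟩

theorem vadd_subset_iUnion_iff_forall_cosetsIn {ι : Type*} {K H : AddSubgroup A}
    {G : ι → AddSubgroup A} (hKH : K ≤ H) (hKG : ∀ i, K ≤ G i) (a : A) (c : ι → A) :
    a +ᵥ (H : Set A) ⊆ ⋃ i, c i +ᵥ (G i : Set A) ↔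
      ∀ C ∈ K.cosetsIn (a +ᵥ (H : Set A)), ∃ i, C ⊆ c i +ᵥ (G i : Set A) := by
  constructor
  · rintro hcover C ⟨⟨t, rfl⟩, hC⟩
    obtain ⟨i, hi⟩ := Set.mem_iUnion.1 (hcover (hC (mem_own_leftAddCoset K.toAddSubmonoid t)))
    exact ⟨i, vadd_subset_vadd_of_mem (hKG i) hi⟩
  · intro h x hx
    obtain ⟨i, hi⟩ := h (x +ᵥ (K : Set A)) ⟨⟨x, rfl⟩, vadd_subset_vadd_of_mem hKH hx⟩
    exact Set.mem_iUnion.2 ⟨i, hi (mem_own_leftAddCoset K.toAddSubmonoid x)⟩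

end AddSubgroup

/-- Inclusion–exclusion for cosets: `X ⊆ X₁ ∪ … ∪ Xₙ` iff the alternating sum over subsets
`Δ ⊆ {1,…,n}` of the number of cosets of `K₀ = H ∩ ⋂ᵢ Hᵢ` contained in `X ∩ ⋂_{i∈Δ} Xᵢ`
vanishes. -/
theorem coset_inclusion_exclusion {A : Type*} [AddCommGroup A] {n : ℕ}
    (H : AddSubgroup A) (Hs : Fin n → AddSubgroup A) (a : A) (c : Fin n → A)
    (K₀ : AddSubgroup A) (hK₀ : K₀ = H ⊓ ⨅ i, Hs i)
    (hfin : K₀.relIndex H ≠ 0) :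
    (a +ᵥ (H : Set A)) ⊆ (⋃ i, (c i +ᵥ (Hs i : Set A))) ↔
      ∑ Δ : Finset (Fin n),
          (-1 : ℤ) ^ Δ.card *
            (Nat.card {C : Set A // (∃ t : A, C = t +ᵥ (K₀ : Set A)) ∧
                C ⊆ (a +ᵥ (H : Set A)) ∩ ⋂ i ∈ Δ, (c i +ᵥ (Hs i : Set A))} : ℤ) = 0 := by
  have hKH : K₀ ≤ H := hK₀ ▸ inf_le_left
  have hKHs : ∀ i, K₀ ≤ Hs i := fun i => hK₀ ▸ inf_le_right.trans (iInf_le Hs i)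
  change _ ↔ ∑ Δ : Finset (Fin n), (-1 : ℤ) ^ #Δ *
    (Nat.card (K₀.cosetsIn ((a +ᵥ (H : Set A)) ∩ ⋂ i ∈ Δ, (c i +ᵥ (Hs i : Set A)))) : ℤ) = 0
  simp_rw [AddSubgroup.cosetsIn_inter_biInter,
    (AddSubgroup.finite_cosetsIn_vadd hfin a).sum_neg_one_pow_mul_natCard_sep_eq_zero_iff]
  exact AddSubgroup.vadd_subset_iUnion_iff_forall_cosetsIn hKH hKHs a c
end

section
/- Stability via indiscernibles for coset-type formulas: let A be an abelian group, S ≤ Aⁿ × Aᵐ a subgroup, and define φ*(a⃗, b⃗) to hold iff (a⃗, b⃗) ∈ S. Suppose (a⃗ᵢ, b⃗ᵢ)_{i<ω} is a sequence such that for all i < j and k < l, φ*(a⃗ⱼ, b⃗ᵢ) ↔ φ*(a⃗ₗ, b⃗ₖ) (order-indiscernibility for φ*). Then for i < j, φ*(a⃗ⱼ, b⃗ᵢ) holds iff φ*(a⃗ᵢ, b⃗ⱼ) holds, provided additionally φ*(a⃗ᵢ, b⃗ᵢ)-pattern indiscernibility: for all i₁<...<i_r and j₁<...<j_r the truth values of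 φ* on corresponding pairs agree. -/
/-!
A subgroup `S ≤ G × H` is a difunctional relation: if `(x, y)`, `(x', y)` and `(x', y')` lie in
`S`, so does `(x, y') = (x, y) - (x', y) + (x', y')`. For indiscernible sequences this closes up
a zigzag: from `(aⱼ, bᵢ) ∈ S` with `i < j`, choose `k > j`; then `(aₖ, bᵢ), (aₖ, bⱼ) ∈ S`, which
puts `(aⱼ, bⱼ)` and hence every diagonal pair `(aᵢ, bᵢ)` in `S`, and the zigzag
`(aᵢ, bᵢ), (aⱼ, bᵢ), (aⱼ, bⱼ)` gives `(aᵢ, bⱼ) ∈ S`. The converse is the same argument for the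
transposed relation.
-/

namespace Relation

variable {α β ι : Type*}

def Difunctional (R : α → β → Prop) : Prop :=
  ∀ ⦃x x' y y'⦄, R x y → R x' y → R x' y' → R x y'

theorem Difunctional.flip {R : α → β → Prop} (hR : Difunctional R) : Difunctional (flip R) :=
  fun _ _ _ _ h₁ h₂ h₃ => hR h₃ h₂ h₁

def OrderIndiscernible [LT ι] (R : α → β → Prop) (a : ι → α) (b : ι → β) : Prop :=
  ∀ i j k l : ι, (i < j ↔ k < l) → (i = j ↔ k = l) → (R (a i) (b j) ↔ R (a k) (b l))

namespace OrderIndiscernible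

variable [LinearOrder ι] {R : α → β → Prop} {a : ι → α} {b : ι → β}

theorem flip (h : OrderIndiscernible R a b) : OrderIndiscernible (_root_.flip R) b a := by
  intro i j k l hlt heq
  have hgt : j < i ↔ l < k := by
    rw [← not_le, ← not_le, le_iff_lt_or_eq, le_iff_lt_or_eq, hlt, heq]
  exact h j i l k hgt (by rw [eq_comm, heq, eq_comm])

theorem iff_diag (h : OrderIndiscernible R a b) (i j : ι) :
    R (a i) (b i) ↔ R (a j) (b j) :=
  h i i j j (iff_of_false (lt_irrefl i) (lt_irrefl j)) (iff_of_true rfl rfl)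

theorem iff_of_gt (h : OrderIndiscernible R a b) {i j k l : ι} (hij : j < i) (hkl : l < k) :
    R (a i) (b j) ↔ R (a k) (b l) :=
  h i j k l (iff_of_false hij.not_gt hkl.not_gt) (iff_of_false hij.ne' hkl.ne')

theorem rel_of_rel_of_lt [NoMaxOrder ι] (h : OrderIndiscernible R a b) (hR : Difunctional R)
    {i j : ι} (hij : i < j) (hji : R (a j) (b i)) : R (a i) (b j) := by
  obtain ⟨k, hjk⟩ := exists_gt j
  have hki : R (a k) (b i) := (h.iff_of_gt hij (hij.trans hjk)).1 hji
  have hkj : R (a k) (b j) := (h.iff_of_gt hij hjk).1 hji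
  have hjj : R (a j) (b j) := hR hji hki hkj
  exact hR ((h.iff_diag j i).1 hjj) hji hjj

theorem rel_comm_of_lt [NoMaxOrder ι] (h : OrderIndiscernible R a b) (hR : Difunctional R)
    {i j : ι} (hij : i < j) : R (a j) (b i) ↔ R (a i) (b j) :=
  ⟨h.rel_of_rel_of_lt hR hij, h.flip.rel_of_rel_of_lt hR.flip hij⟩

end OrderIndiscernible

end Relation

theorem AddSubgroup.difunctional_mem_prod {G H : Type*} [AddGroup G] [AddGroup H]
    (S : AddSubgroup (G × H)) : Relation.Difunctional fun x y => (x, y) ∈ S := by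
  intro x x' y y' h₁ h₂ h₃
  simpa using S.add_mem (S.sub_mem h₁ h₂) h₃

/-- Stability via indiscernibles for the relation defined by a subgroup `S ≤ Aⁿ × Aᵐ`:
if the truth value of `(a⃗ᵢ, b⃗ⱼ) ∈ S` depends only on the order type of `(i,j)`, then
for `i < j`, `(a⃗ⱼ, b⃗ᵢ) ∈ S ↔ (a⃗ᵢ, b⃗ⱼ) ∈ S`. -/
theorem stability_of_subgroup_relation {A : Type*} [AddCommGroup A] {n m : ℕ}
    (S : AddSubgroup ((Fin n → A) × (Fin m → A)))
    (a : ℕ → (Fin n → A)) (b : ℕ → (Fin m → A))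
    (hind : ∀ i j k l : ℕ, (i < j ↔ k < l) → (i = j ↔ k = l) →
      ((a i, b j) ∈ S ↔ (a k, b l) ∈ S)) :
    ∀ i j : ℕ, i < j → ((a j, b i) ∈ S ↔ (a i, b j) ∈ S) :=
  fun _ _ hij =>
    Relation.OrderIndiscernible.rel_comm_of_lt (R := fun x y => (x, y) ∈ S) hind
      S.difunctional_mem_prod hij
end
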